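/- Hölder comparison of μ and M: let M be a Borel measure on ℝ² with M(B(x,u)) ≤ C u^δ for all x ∈ B(0,1), 0 < u < 1, for some C, δ > 0. Define μ̄(x,r) = ∫_{B(x,2r)} ln(1/|x-z|) M(dz). Then for every ε ∈ (0,1) there is a constant C_ε such that μ̄(x,r) ≤ C_ε M(B(x,2r))^{1-ε} for all x ∈ B(0,1) and 0 < r < 1/2. -/

import Mathlib

open MeasureTheory Metric ENNReal

/-- Hölder comparison of `μ̄` and `M`: let `M` be a Borel measure on `ℝ²`
with `M(B(x,u)) ≤ C u^δ` for all `x ∈ B(0,1)`, `0 < u < 1`, for some `C, δ > 0`. Define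
`μ̄(x,r) = ∫_{B(x,2r)} ln(1/|x-z|) M(dz)`. Then for every `ε ∈ (0,1)` there is a constant
`C_ε` such that `μ̄(x,r) ≤ C_ε M(B(x,2r))^{1-ε}` for all `x ∈ B(0,1)` and `0 < r < 1/2`. -/
theorem mu_bar_holder_comparison (M : Measure (EuclideanSpace ℝ (Fin 2)))
    (C δ : ℝ) (hC : 0 < C) (hδ : 0 < δ)
    (hM : ∀ x ∈ ball (0 : EuclideanSpace ℝ (Fin 2)) 1, ∀ u : ℝ, 0 < u → u < 1 →
      M (ball x u) ≤ ENNReal.ofReal (C * u ^ δ)) :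
    ∀ ε : ℝ, 0 < ε → ε < 1 →
      ∃ Cε : ℝ, 0 < Cε ∧
        ∀ x ∈ ball (0 : EuclideanSpace ℝ (Fin 2)) 1, ∀ r : ℝ, 0 < r → r < 1 / 2 →
          (∫⁻ z in ball x (2 * r), ENNReal.ofReal (Real.log (1 / dist x z)) ∂M)
            ≤ ENNReal.ofReal Cε * (M (ball x (2 * r))) ^ (1 - ε) := by
  intro ε hε hε1
  -- geometric ratio
  set Q : ℝ := (((1:ℝ)/2) ^ δ) ^ ε with hQdef
  have hhalf : (0:ℝ) < 1/2 := by norm_num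
  have hQpos : 0 < Q := Real.rpow_pos_of_pos (Real.rpow_pos_of_pos hhalf δ) ε
  have hQlt1 : Q < 1 := by
    have h1 : ((1:ℝ)/2) ^ δ < 1 := Real.rpow_lt_one (by norm_num) (by norm_num) hδ
    exact Real.rpow_lt_one (le_of_lt (Real.rpow_pos_of_pos hhalf δ)) h1 hε
  -- summable series
  have hsum : Summable (fun n : ℕ => ((n:ℝ)+1) * Real.log 2 * (C ^ ε * Q ^ n)) := by
    have h1 : Summable (fun n : ℕ => (n:ℝ) * Q ^ n) := by
      have := summable_pow_mul_geometric_of_norm_lt_one 1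
        (r := Q) (by rw [Real.norm_eq_abs, abs_of_pos hQpos]; exact hQlt1)
      simpa using this
    have h2 : Summable (fun n : ℕ => Q ^ n) := summable_geometric_of_lt_one hQpos.le hQlt1
    have h3 : Summable (fun n : ℕ => ((n:ℝ)+1) * Q ^ n) := by
      have := h1.add h2
      convert this using 2 with n
      ring
    have := h3.mul_left (Real.log 2 * C ^ ε)
    exact this.congr (fun n => by ring)
  set S : ℝ := ∑' n : ℕ, ((n:ℝ)+1) * Real.log 2 * (C ^ ε * Q ^ n) with hSdef
  have hS0 : 0 ≤ S := tsum_nonneg (fun n => by positivity)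
  refine ⟨S + 1, by linarith, ?_⟩
  intro x hx r hr hr2
  set m : ℝ≥0∞ := M (ball x (2*r)) with hmdef
  have h2r1 : 2 * r < 1 := by linarith
  have h2rpos : 0 < 2 * r := by linarith
  -- annuli
  set A : ℕ → Set (EuclideanSpace ℝ (Fin 2)) := fun n =>
    ball x (2*r) ∩ (ball x (((1:ℝ)/2)^n) \ ball x (((1:ℝ)/2)^(n+1))) with hAdef
  -- covering
  have hcover : ball x (2*r) ⊆ {x} ∪ ⋃ n, A n := by
    intro z hz
    by_cases hzx : z = x
    · exact Or.inl hzx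
    · right
      have hd0 : 0 < dist z x := dist_pos.mpr hzx
      have hd1 : dist z x < 1 := lt_trans (mem_ball.mp hz) h2r1
      have hex : ∃ n : ℕ, ((1:ℝ)/2)^n ≤ dist z x := by
        obtain ⟨n, hn⟩ := exists_pow_lt_of_lt_one hd0 (show (1:ℝ)/2 < 1 by norm_num)
        exact ⟨n, hn.le⟩
      set n₀ := Nat.find hex with hn₀
      have hfind : ((1:ℝ)/2)^n₀ ≤ dist z x := Nat.find_spec hex
      have hn₀pos : 0 < n₀ := by
        rcases Nat.eq_zero_or_pos n₀ with h | h
        · exfalso; rw [h] at hfind; simp at hfind; linarith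
        · exact h
      refine Set.mem_iUnion.mpr ⟨n₀ - 1, hz, ?_, ?_⟩
      · have := Nat.find_min hex (show n₀ - 1 < n₀ from Nat.sub_lt hn₀pos one_pos)
        exact mem_ball.mpr (lt_of_not_ge this)
      · intro hmem
        have : dist z x < ((1:ℝ)/2)^(n₀ - 1 + 1) := mem_ball.mp hmem
        rw [Nat.sub_add_cancel hn₀pos] at this
        linarith
  -- bound on measures of annuli
  have hball : ∀ n : ℕ, M (A n) ≤ ENNReal.ofReal (C * (((1:ℝ)/2)^n) ^ δ) := by
    intro n
    rcases Nat.eq_zero_or_pos n with h | h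
    · subst h
      have h1 : M (A 0) ≤ m := measure_mono Set.inter_subset_left
      have h2 : m ≤ ENNReal.ofReal (C * (2*r) ^ δ) := hM x hx (2*r) h2rpos h2r1
      refine le_trans (le_trans h1 h2) (ENNReal.ofReal_le_ofReal ?_)
      have : (2*r) ^ δ ≤ ((1:ℝ)) ^ δ :=
        Real.rpow_le_rpow (le_of_lt h2rpos) (le_of_lt h2r1) hδ.le
      simp only [pow_zero]
      nlinarith [Real.one_rpow δ]
    · have h1 : M (A n) ≤ M (ball x (((1:ℝ)/2)^n)) :=
        measure_mono (fun z hz => hz.2.1)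
      refine le_trans h1 (hM x hx _ (by positivity) ?_)
      exact pow_lt_one₀ (by norm_num) (by norm_num) h.ne'
  -- interpolation bound
  have hAinterp : ∀ n : ℕ, M (A n) ≤
      m ^ (1 - ε) * (ENNReal.ofReal (C * (((1:ℝ)/2)^n) ^ δ)) ^ ε := by
    intro n
    have h1 : M (A n) = M (A n) ^ (1 - ε) * M (A n) ^ ε := by
      rw [← ENNReal.rpow_add_of_nonneg _ _ (by linarith) hε.le]
      simp
    rw [h1]
    exact mul_le_mul'
      (ENNReal.rpow_le_rpow (measure_mono Set.inter_subset_left) (by linarith))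
      (ENNReal.rpow_le_rpow (hball n) hε.le)
  -- pointwise bound on annuli
  have hptwise : ∀ n : ℕ, ∀ z ∈ A n,
      ENNReal.ofReal (Real.log (1 / dist x z)) ≤ ENNReal.ofReal (((n:ℝ)+1) * Real.log 2) := by
    intro n z hz
    apply ENNReal.ofReal_le_ofReal
    have hd : ((1:ℝ)/2)^(n+1) ≤ dist z x := le_of_not_gt (fun h => hz.2.2 (mem_ball.mpr h))
    have hdpos : 0 < dist z x := lt_of_lt_of_le (by positivity) hd
    rw [dist_comm]
    have h1 : 1 / dist z x ≤ 2 ^ (n+1) := by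
      rw [div_le_iff₀ hdpos]
      have : ((1:ℝ)/2)^(n+1) * 2^(n+1) = 1 := by
        rw [← mul_pow]; norm_num
      nlinarith [pow_pos (show (0:ℝ) < 2 by norm_num) (n+1)]
    calc Real.log (1 / dist z x) ≤ Real.log (2 ^ (n+1)) :=
          Real.log_le_log (by positivity) h1
      _ = ((n:ℝ)+1) * Real.log 2 := by
          rw [Real.log_pow]; push_cast; ring
  -- main estimate
  calc (∫⁻ z in ball x (2 * r), ENNReal.ofReal (Real.log (1 / dist x z)) ∂M)
      ≤ ∫⁻ z in ({x} ∪ ⋃ n, A n), ENNReal.ofReal (Real.log (1 / dist x z)) ∂M :=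
        lintegral_mono_set hcover
    _ ≤ (∫⁻ z in ({x} : Set _), ENNReal.ofReal (Real.log (1 / dist x z)) ∂M)
        + ∫⁻ z in (⋃ n, A n), ENNReal.ofReal (Real.log (1 / dist x z)) ∂M :=
        lintegral_union_le _ _ _
    _ = ∫⁻ z in (⋃ n, A n), ENNReal.ofReal (Real.log (1 / dist x z)) ∂M := by
        rw [lintegral_singleton]
        simp
    _ ≤ ∑' n, ∫⁻ z in A n, ENNReal.ofReal (Real.log (1 / dist x z)) ∂M :=
        lintegral_iUnion_le _ _
    _ ≤ ∑' n : ℕ, ENNReal.ofReal (((n:ℝ)+1) * Real.log 2) *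
          (m ^ (1 - ε) * (ENNReal.ofReal (C * (((1:ℝ)/2)^n) ^ δ)) ^ ε) := by
        refine ENNReal.tsum_le_tsum (fun n => ?_)
        calc (∫⁻ z in A n, ENNReal.ofReal (Real.log (1 / dist x z)) ∂M)
            ≤ ∫⁻ _ in A n, ENNReal.ofReal (((n:ℝ)+1) * Real.log 2) ∂M := by
              refine setLIntegral_mono measurable_const (hptwise n)
          _ = ENNReal.ofReal (((n:ℝ)+1) * Real.log 2) * M (A n) := by
              rw [setLIntegral_const]
          _ ≤ _ := mul_le_mul_right (hAinterp n) _
    _ = (∑' n : ℕ, ENNReal.ofReal (((n:ℝ)+1) * Real.log 2) *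
          (ENNReal.ofReal (C * (((1:ℝ)/2)^n) ^ δ)) ^ ε) * m ^ (1 - ε) := by
        rw [← ENNReal.tsum_mul_right]
        exact tsum_congr fun n => by ring
    _ ≤ ENNReal.ofReal (S + 1) * m ^ (1 - ε) := by
        refine mul_le_mul_left ?_ _
        have hterm : ∀ n : ℕ, ENNReal.ofReal (((n:ℝ)+1) * Real.log 2) *
            (ENNReal.ofReal (C * (((1:ℝ)/2)^n) ^ δ)) ^ ε
            = ENNReal.ofReal (((n:ℝ)+1) * Real.log 2 * (C ^ ε * Q ^ n)) := by
          intro n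
          rw [ENNReal.ofReal_rpow_of_nonneg (by positivity) hε.le,
            ← ENNReal.ofReal_mul (by positivity)]
          congr 1
          rw [Real.mul_rpow hC.le (by positivity)]
          congr 1
          rw [hQdef, ← Real.rpow_natCast ((1:ℝ)/2) n,
            ← Real.rpow_natCast ((((1:ℝ)/2) ^ δ) ^ ε) n,
            ← Real.rpow_mul hhalf.le, ← Real.rpow_mul hhalf.le,
            ← Real.rpow_mul hhalf.le, ← Real.rpow_mul hhalf.le]
          ring_nf
        calc (∑' n : ℕ, ENNReal.ofReal (((n:ℝ)+1) * Real.log 2) *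
              (ENNReal.ofReal (C * (((1:ℝ)/2)^n) ^ δ)) ^ ε)
            = ∑' n : ℕ, ENNReal.ofReal (((n:ℝ)+1) * Real.log 2 * (C ^ ε * Q ^ n)) :=
              tsum_congr hterm
          _ = ENNReal.ofReal S := by
              rw [hSdef, ENNReal.ofReal_tsum_of_nonneg (fun n => by positivity) hsum]
          _ ≤ ENNReal.ofReal (S + 1) := ENNReal.ofReal_le_ofReal (by linarith)
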